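/- arXiv:1502.03183 — 4 statements merged into one kernel-verified Lean document; each statement's English description precedes it below -/
import Mathlib

section
/- Let n ≥ 4 be an integer, M > 0 and λ > 0 satisfy the nondegeneracy condition M² λ^{n-3} < (n-3)^{n-3}/(n-1)^{n-1}, let μ̃(r) = r^{-2} - 2M r^{1-n} - λ and r_p = ((n-1)M)^{1/(n-3)}. Then there exist unique real numbers r_-, r_+ with 0 < r_- < r_p < r_+ such that μ̃(r_-) = μ̃(r_+) = 0; moreover μ̃(r) > 0 for r_- < r < r_+, and μ̃(r) < 0 for 0 < r < r_- and for r > r_+. -/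
/-!
Since `μ̃'(r) = 2 r^{-n} ((n-1) M - r^{n-3})`, the coefficient `μ̃` increases strictly on `(0, r_p]`
and decreases strictly on `[r_p, ∞)`. It is negative near `0` and near `∞` (where it tends to `-λ`),
and `μ̃(r_p) = r_p^{-2} (n-3)/(n-1) - λ` is positive exactly under the nondegeneracy condition.
The intermediate value theorem on both sides of `r_p` then yields the two horizons, and strict
monotonicity gives the signs and the uniqueness.
-/

/-- The rescaled Schwarzschild–de Sitter metric coefficient
`μ̃(r) = r^{-2} - 2 M r^{1-n} - λ`. -/
noncomputable def mutilde (n : ℕ) (M lam : ℝ) (r : ℝ) : ℝ :=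
  r ^ (-2 : ℝ) - 2 * M * r ^ ((1 : ℝ) - (n : ℝ)) - lam

/-- The radius `r_p = ((n-1) M)^{1/(n-3)}` of the photon sphere. -/
noncomputable def rpCrit (n : ℕ) (M : ℝ) : ℝ :=
  (((n : ℝ) - 1) * M) ^ ((1 : ℝ) / ((n : ℝ) - 3))

open Set Filter Topology

section Unimodal

variable {α δ : Type*} [ConditionallyCompleteLinearOrder α] [TopologicalSpace α] [OrderTopology α]
  [DenselyOrdered α] [LinearOrder δ] [TopologicalSpace δ] [OrderClosedTopology δ] [Zero δ]
  {f : α → δ} {a c : α}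

theorem exists_zeros_of_strictMonoOn_of_strictAntiOn (hf : ContinuousOn f (Ioi a))
    (hmono : StrictMonoOn f (Ioc a c)) (hanti : StrictAntiOn f (Ici c)) (hc : 0 < f c)
    (hleft : ∃ x ∈ Ioo a c, f x < 0) (hright : ∃ y, c < y ∧ f y < 0) :
    ∃ rm rp : α,
      (a < rm ∧ rm < c ∧ c < rp ∧ f rm = 0 ∧ f rp = 0) ∧
      (∀ r, rm < r → r < rp → 0 < f r) ∧
      (∀ r, a < r → r < rm → f r < 0) ∧
      (∀ r, rp < r → f r < 0) ∧
      (∀ rm' rp', (a < rm' ∧ rm' < c ∧ c < rp' ∧ f rm' = 0 ∧ f rp' = 0) →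
        rm' = rm ∧ rp' = rp) := by
  obtain ⟨x, ⟨hax, hxc⟩, hfx⟩ := hleft
  obtain ⟨y, hcy, hfy⟩ := hright
  obtain ⟨rm, ⟨hxrm, hrmc⟩, hrm⟩ := intermediate_value_Ioo hxc.le
    (hf.mono fun r hr ↦ hax.trans_le hr.1) ⟨hfx, hc⟩
  obtain ⟨rp, ⟨hcrp, -⟩, hrp⟩ := intermediate_value_Ioo' hcy.le
    (hf.mono fun r hr ↦ (hax.trans hxc).trans_le hr.1) ⟨hfy, hc⟩
  have harm : a < rm := hax.trans hxrm
  refine ⟨rm, rp, ⟨harm, hrmc, hcrp, hrm, hrp⟩, fun r h₁ h₂ ↦ ?_, fun r h₁ h₂ ↦ ?_,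
    fun r h ↦ ?_, fun rm' rp' ⟨h₁, h₂, h₃, h₄, h₅⟩ ↦ ⟨?_, ?_⟩⟩
  · rcases le_total r c with hrc | hcr
    · exact hrm ▸ hmono ⟨harm, hrmc.le⟩ ⟨harm.trans h₁, hrc⟩ h₁
    · exact hrp ▸ hanti hcr hcrp.le h₂
  · exact hrm ▸ hmono ⟨h₁, (h₂.trans hrmc).le⟩ ⟨harm, hrmc.le⟩ h₂
  · exact hrp ▸ hanti hcrp.le (hcrp.trans h).le h
  · exact hmono.injOn ⟨h₁, h₂.le⟩ ⟨harm, hrmc.le⟩ (h₄.trans hrm.symm)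
  · exact hanti.injOn h₃.le hcrp.le (h₅.trans hrp.symm)

end Unimodal

section Mutilde

variable {n : ℕ} {M lam r : ℝ}

theorem hasDerivAt_mutilde (hr : 0 < r) :
    HasDerivAt (mutilde n M lam)
      (2 * r ^ (-(n : ℝ)) * ((n - 1) * M - r ^ ((n : ℝ) - 3))) r := by
  have h₁ := Real.hasDerivAt_rpow_const (p := -2) (Or.inl hr.ne')
  have h₂ := Real.hasDerivAt_rpow_const (p := 1 - n) (Or.inl hr.ne')
  refine ((h₁.sub (h₂.const_mul (2 * M))).sub_const lam).congr_deriv ?_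
  have h₃ : r ^ ((-2 : ℝ) - 1) = r ^ (-(n : ℝ)) * r ^ ((n : ℝ) - 3) := by
    rw [← Real.rpow_add hr]; ring_nf
  rw [h₃, show (1 : ℝ) - n - 1 = -n by ring]
  ring

theorem continuousOn_mutilde : ContinuousOn (mutilde n M lam) (Ioi 0) :=
  fun _ hr ↦ (hasDerivAt_mutilde hr).continuousAt.continuousWithinAt

theorem mutilde_eq (hr : 0 < r) :
    mutilde n M lam r = r ^ (-2 : ℝ) * (1 - 2 * M / r ^ ((n : ℝ) - 3)) - lam := by
  have h : r ^ ((1 : ℝ) - n) * r ^ ((n : ℝ) - 3) = r ^ (-2 : ℝ) := by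
    rw [← Real.rpow_add hr]; ring_nf
  have hpos : 0 < r ^ ((n : ℝ) - 3) := Real.rpow_pos_of_pos hr _
  rw [mutilde, ← h]
  field_simp

theorem tendsto_mutilde_atTop (hn : 1 < n) :
    Tendsto (mutilde n M lam) atTop (𝓝 (-lam)) := by
  have h₁ := tendsto_rpow_neg_atTop (y := 2) two_pos
  have h₂ := (tendsto_rpow_neg_atTop (y := (n : ℝ) - 1) (by
    have : (1 : ℝ) < n := by exact_mod_cast hn
    linarith)).const_mul (2 * M)
  have := (h₁.sub h₂).sub_const lam
  simp only [mul_zero, sub_zero, zero_sub] at this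
  convert this using 2 with r
  rw [mutilde, neg_sub]

theorem rpCrit_pos (hn : 3 < n) (hM : 0 < M) : 0 < rpCrit n M := by
  have : (3 : ℝ) < n := by exact_mod_cast hn
  exact Real.rpow_pos_of_pos (mul_pos (by linarith) hM) _

theorem rpCrit_rpow (hn : 3 < n) (hM : 0 < M) : rpCrit n M ^ ((n : ℝ) - 3) = (n - 1) * M := by
  have : (3 : ℝ) < n := by exact_mod_cast hn
  rw [rpCrit, one_div, Real.rpow_inv_rpow (by nlinarith) (by linarith)]

theorem strictMonoOn_mutilde (hn : 3 < n) (hM : 0 < M) :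
    StrictMonoOn (mutilde n M lam) (Ioc 0 (rpCrit n M)) := by
  refine strictMonoOn_of_deriv_pos (convex_Ioc _ _) (continuousOn_mutilde.mono Ioc_subset_Ioi_self)
    fun r hr ↦ ?_
  rw [interior_Ioc] at hr
  rw [(hasDerivAt_mutilde hr.1).deriv]
  have hlt : r ^ ((n : ℝ) - 3) < (n - 1) * M :=
    rpCrit_rpow hn hM ▸ Real.rpow_lt_rpow hr.1.le hr.2 (sub_pos.2 (by exact_mod_cast hn))
  exact mul_pos (mul_pos two_pos (Real.rpow_pos_of_pos hr.1 _)) (sub_pos.2 hlt)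

theorem strictAntiOn_mutilde (hn : 3 < n) (hM : 0 < M) :
    StrictAntiOn (mutilde n M lam) (Ici (rpCrit n M)) := by
  have hp := rpCrit_pos hn hM
  refine strictAntiOn_of_deriv_neg (convex_Ici _)
    (continuousOn_mutilde.mono fun r hr ↦ hp.trans_le hr) fun r hr ↦ ?_
  rw [interior_Ici] at hr
  have hr₀ : 0 < r := hp.trans hr
  rw [(hasDerivAt_mutilde hr₀).deriv]
  have hlt : (n - 1) * M < r ^ ((n : ℝ) - 3) :=
    rpCrit_rpow hn hM ▸ Real.rpow_lt_rpow hp.le hr (sub_pos.2 (by exact_mod_cast hn))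
  exact mul_neg_of_pos_of_neg (mul_pos two_pos (Real.rpow_pos_of_pos hr₀ _)) (sub_neg.2 hlt)

theorem exists_mutilde_neg_of_lt_rpCrit (hn : 3 < n) (hM : 0 < M) (hlam : 0 ≤ lam) :
    ∃ x ∈ Ioo 0 (rpCrit n M), mutilde n M lam x < 0 := by
  have hn' : (3 : ℝ) < n := by exact_mod_cast hn
  -- `x^{n-3} = M` makes `μ̃(x) = -x^{-2} - λ`.
  set x := M ^ ((n : ℝ) - 3)⁻¹
  have hx : 0 < x := Real.rpow_pos_of_pos hM _
  have hxd : x ^ ((n : ℝ) - 3) = M := Real.rpow_inv_rpow hM.le (by linarith)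
  have hxp : x < rpCrit n M := by
    rw [← Real.rpow_lt_rpow_iff hx.le (rpCrit_pos hn hM).le (sub_pos.2 hn'), hxd, rpCrit_rpow hn hM]
    nlinarith
  refine ⟨x, ⟨hx, hxp⟩, ?_⟩
  rw [mutilde_eq hx, hxd, mul_div_cancel_right₀ _ hM.ne']
  nlinarith [Real.rpow_pos_of_pos hx (-2)]

theorem mutilde_rpCrit_pos (hn : 3 < n) (hM : 0 < M) (hlam : 0 < lam)
    (hnd : M ^ 2 * lam ^ ((n : ℝ) - 3)
      < ((n : ℝ) - 3) ^ ((n : ℝ) - 3) / ((n : ℝ) - 1) ^ ((n : ℝ) - 1)) :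
    0 < mutilde n M lam (rpCrit n M) := by
  have hd : (0 : ℝ) < n - 3 := sub_pos.2 (by exact_mod_cast hn)
  have hn₁ : (0 : ℝ) < n - 1 := by linarith
  have hp := rpCrit_pos hn hM
  have h₁ : 1 - 2 * M / ((n - 1) * M) = ((n : ℝ) - 3) / (n - 1) := by
    field_simp
    ring
  have h₂ : (rpCrit n M ^ (-2 : ℝ)) ^ ((n : ℝ) - 3) = (((n - 1) * M) ^ 2)⁻¹ := by
    rw [← Real.rpow_mul hp.le, mul_comm, Real.rpow_mul hp.le, rpCrit_rpow hn hM,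
      Real.rpow_neg (by positivity), Real.rpow_two]
  have h₃ : ((n : ℝ) - 1) ^ ((n : ℝ) - 1) = (n - 1) ^ ((n : ℝ) - 3) * (n - 1) ^ 2 := by
    rw [← Real.rpow_two, ← Real.rpow_add hn₁]
    ring_nf
  -- Raise `λ < r_p^{-2} (n-3)/(n-1)` to the power `n - 3`, using `r_p^{n-3} = (n-1) M`.
  rw [mutilde_eq hp, rpCrit_rpow hn hM, sub_pos, h₁,
    ← Real.rpow_lt_rpow_iff hlam.le (by positivity) hd,
    Real.mul_rpow (by positivity) (by positivity), h₂, Real.div_rpow hd.le hn₁.le]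
  rw [h₃] at hnd
  have h₄ : (((n - 1) * M) ^ 2)⁻¹ * (((n : ℝ) - 3) ^ ((n : ℝ) - 3) / (n - 1) ^ ((n : ℝ) - 3))
      = ((n : ℝ) - 3) ^ ((n : ℝ) - 3) / ((n - 1) ^ ((n : ℝ) - 3) * (n - 1) ^ 2) / M ^ 2 := by
    field_simp
  rw [h₄, lt_div_iff₀ (by positivity)]
  linarith

end Mutilde

theorem stmt3 (n : ℕ) (hn : 4 ≤ n) (M lam : ℝ) (hM : 0 < M) (hlam : 0 < lam)
    (hnd : M ^ 2 * lam ^ ((n : ℝ) - 3)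
      < ((n : ℝ) - 3) ^ ((n : ℝ) - 3) / ((n : ℝ) - 1) ^ ((n : ℝ) - 1)) :
    ∃ rm rp : ℝ,
      (0 < rm ∧ rm < rpCrit n M ∧ rpCrit n M < rp ∧
        mutilde n M lam rm = 0 ∧ mutilde n M lam rp = 0) ∧
      (∀ r : ℝ, rm < r → r < rp → 0 < mutilde n M lam r) ∧
      (∀ r : ℝ, 0 < r → r < rm → mutilde n M lam r < 0) ∧
      (∀ r : ℝ, rp < r → mutilde n M lam r < 0) ∧
      (∀ rm' rp' : ℝ,
        (0 < rm' ∧ rm' < rpCrit n M ∧ rpCrit n M < rp' ∧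
          mutilde n M lam rm' = 0 ∧ mutilde n M lam rp' = 0) →
        rm' = rm ∧ rp' = rp) := by
  have hn₃ : 3 < n := hn
  have hright : ∃ y, rpCrit n M < y ∧ mutilde n M lam y < 0 :=
    ((eventually_gt_atTop _).and
      ((tendsto_mutilde_atTop (by omega)).eventually_lt_const (neg_neg_iff_pos.2 hlam))).exists
  exact exists_zeros_of_strictMonoOn_of_strictAntiOn continuousOn_mutilde
    (strictMonoOn_mutilde hn₃ hM) (strictAntiOn_mutilde hn₃ hM) (mutilde_rpCrit_pos hn₃ hM hlam hnd)
    (exists_mutilde_neg_of_lt_rpCrit hn₃ hM hlam.le) hright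
end

section
/- Let N ≥ 1 and let b₀ and b be positive definite Hermitian N×N complex matrices. For t ∈ [0,1] set b_t = (1-t) b₀ + t b, which is positive definite and hence invertible for every t ∈ [0,1]. Suppose q : ℝ → M_N(ℂ) is differentiable on [0,1] with q(0) = Id and q'(t) = ½ q(t) b_t^{-1} (b - b₀) for all t ∈ [0,1]. Then q(t)* b₀ q(t) = b_t for all t ∈ [0,1]; in particular q(1) is invertible and b = q(1)* b₀ q(1). -/
/-! Both `t ↦ q(t)ᴴ b₀ q(t)` and `t ↦ b_t` solve the linear matrix ODE `X' = Mᴴ X + X M` with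
`M(t) = ½ b_t⁻¹ (b - b₀)`: the first by the product rule, the second because `b_t` and `b - b₀` are
Hermitian, so that `Mᴴ b_t + b_t M = b - b₀`. Their values at `t = 0` agree, and `M` is
continuous on the compact interval `[0, 1]` (as `b_t` stays positive definite), so the ODE is
uniformly Lipschitz there and its solutions are unique. -/

attribute [local instance] Matrix.normedAddCommGroup Matrix.normedSpace

open Matrix
open scoped ComplexOrder

open Set

theorem eqOn_Icc_of_hasDerivWithinAt_clm_apply {E : Type*} [NormedAddCommGroup E]
    [NormedSpace ℝ E] {A : ℝ → E →L[ℝ] E} {f g : ℝ → E} {a b : ℝ}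
    (hA : ContinuousOn A (Icc a b))
    (hf : ∀ t ∈ Icc a b, HasDerivWithinAt f (A t (f t)) (Icc a b) t)
    (hg : ∀ t ∈ Icc a b, HasDerivWithinAt g (A t (g t)) (Icc a b) t)
    (ha : f a = g a) : EqOn f g (Icc a b) := by
  obtain ⟨C, hC⟩ := isCompact_Icc.exists_bound_of_continuousOn hA
  have right_deriv {h : ℝ → E} (hh : ∀ t ∈ Icc a b, HasDerivWithinAt h (A t (h t)) (Icc a b) t)
      (t : ℝ) (ht : t ∈ Ico a b) : HasDerivWithinAt h (A t (h t)) (Ici t) t :=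
    (hh t (Ico_subset_Icc_self ht)).mono_of_mem_nhdsWithin (Icc_mem_nhdsGE_of_mem ht)
  refine ODE_solution_unique_of_mem_Icc_right (v := fun t => A t) (s := fun _ => univ)
    (K := C.toNNReal) (fun t ht => ?_) (fun t ht => (hf t ht).continuousWithinAt) (right_deriv hf)
    (fun _ _ => mem_univ _) (fun t ht => (hg t ht).continuousWithinAt) (right_deriv hg)
    (fun _ _ => mem_univ _) ha
  refine ((A t).lipschitz.weaken ?_).lipschitzOnWith
  rw [← norm_toNNReal]
  exact Real.toNNReal_mono (hC t (Ico_subset_Icc_self ht))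

theorem Matrix.PosDef.one_sub_smul_add_smul {n : Type*} {a b : Matrix n n ℂ} (ha : a.PosDef)
    (hb : b.PosDef) {t : ℝ} (ht : t ∈ Icc 0 1) :
    (((1 - t : ℝ) : ℂ) • a + ((t : ℝ) : ℂ) • b).PosDef := by
  have h1 : (0 : ℂ) ≤ ((1 - t : ℝ) : ℂ) := Complex.zero_le_real.2 (sub_nonneg.2 ht.2)
  rcases ht.1.eq_or_lt with rfl | ht0
  · simpa using ha
  · exact PosDef.posSemidef_add (ha.posSemidef.smul h1) (hb.smul (Complex.zero_lt_real.2 ht0))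

namespace Matrix

variable {n 𝕜 : Type*} [Fintype n] [RCLike 𝕜]

noncomputable def mulCLM : Matrix n n 𝕜 →L[ℝ] Matrix n n 𝕜 →L[ℝ] Matrix n n 𝕜 :=
  LinearMap.toContinuousLinearMap
    (LinearMap.toContinuousLinearMap.toLinearMap ∘ₗ LinearMap.mul ℝ (Matrix n n 𝕜))

theorem _root_.HasDerivWithinAt.matrix_mul {u v : ℝ → Matrix n n 𝕜} {u' v' : Matrix n n 𝕜}
    {s : Set ℝ} {t : ℝ} (hu : HasDerivWithinAt u u' s t) (hv : HasDerivWithinAt v v' s t) :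
    HasDerivWithinAt (fun t => u t * v t) (u' * v t + u t * v') s t :=
  (mulCLM.hasDerivWithinAt_of_bilinear hu hv).congr_deriv (add_comm _ _)

noncomputable def lyapunovCLM : Matrix n n 𝕜 →L[ℝ] Matrix n n 𝕜 →L[ℝ] Matrix n n 𝕜 :=
  LinearMap.toContinuousLinearMap <| LinearMap.toContinuousLinearMap.toLinearMap ∘ₗ
    LinearMap.mk₂ ℝ (fun m x => mᴴ * x + x * m)
      (fun _ _ _ => by simp only [conjTranspose_add, add_mul, mul_add]; abel)
      (fun _ _ _ => by simp)
      (fun _ _ _ => by simp only [mul_add, add_mul]; abel)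
      (fun _ _ _ => by simp)

@[simp] lemma lyapunovCLM_apply (m x : Matrix n n 𝕜) : lyapunovCLM m x = mᴴ * x + x * m := rfl

theorem _root_.HasDerivWithinAt.conjTranspose_mul_mul {q : ℝ → Matrix n n 𝕜} {m : Matrix n n 𝕜}
    {s : Set ℝ} {t : ℝ} (hq : HasDerivWithinAt q (q t * m) s t) (c : Matrix n n 𝕜) :
    HasDerivWithinAt (fun t => (q t)ᴴ * c * q t) (lyapunovCLM m ((q t)ᴴ * c * q t)) s t := by
  have := (hq.star.matrix_mul (hasDerivWithinAt_const t s c)).matrix_mul hq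
  simp only [star_eq_conjTranspose, conjTranspose_mul, mul_zero, add_zero] at this
  simpa [mul_assoc] using this

theorem lyapunovCLM_half_inv_mul_self [DecidableEq n] {B D : Matrix n n 𝕜} (hB : B.IsHermitian)
    (hBu : IsUnit B.det) (hD : D.IsHermitian) : lyapunovCLM (((1 : 𝕜) / 2) • (B⁻¹ * D)) B = D := by
  rw [lyapunovCLM_apply, conjTranspose_smul, conjTranspose_mul, conjTranspose_nonsing_inv, hB.eq,
    hD.eq, smul_mul_assoc, mul_smul_comm, mul_assoc, nonsing_inv_mul _ hBu, ← mul_assoc,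
    mul_nonsing_inv _ hBu]
  simp only [mul_one, one_mul, ← add_smul]
  norm_num

theorem hasDerivWithinAt_one_sub_smul_add_smul (a b : Matrix n n ℂ) (s : Set ℝ) (t : ℝ) :
    HasDerivWithinAt (fun t => ((1 - t : ℝ) : ℂ) • a + ((t : ℝ) : ℂ) • b) (b - a) s t := by
  have h := ((((hasDerivWithinAt_id t s).const_sub 1).ofReal_comp).smul_const a).add
    ((hasDerivWithinAt_id t s).ofReal_comp.smul_const b)
  exact h.congr_deriv (by simp [sub_eq_neg_add])

theorem _root_.ContinuousOn.matrix_inv [DecidableEq n] {X : Type*} [TopologicalSpace X]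
    {A : X → Matrix n n 𝕜} {s : Set X} (hA : ContinuousOn A s) (h : ∀ x ∈ s, IsUnit (A x).det) :
    ContinuousOn (fun x => (A x)⁻¹) s := fun x hx =>
  (continuousAt_matrix_inv _ (NormedRing.inverse_continuousAt (h x hx).unit))
    |>.comp_continuousWithinAt (hA x hx)

end Matrix

theorem stmt13_general (N : ℕ)
    (b₀ b : Matrix (Fin N) (Fin N) ℂ) (hb₀ : b₀.PosDef) (hb : b.PosDef)
    -- the interpolated inner products `b_t = (1-t) b₀ + t b`
    (bt : ℝ → Matrix (Fin N) (Fin N) ℂ)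
    (hbt : bt = fun t => ((1 - t : ℝ) : ℂ) • b₀ + ((t : ℝ) : ℂ) • b)
    -- `q` is differentiable on `[0,1]` with `q(0) = Id` and
    -- `q'(t) = ½ q(t) b_t⁻¹ (b - b₀)`
    (q : ℝ → Matrix (Fin N) (Fin N) ℂ) (hq0 : q 0 = 1)
    (hq' : ∀ t ∈ Set.Icc (0 : ℝ) 1,
      HasDerivWithinAt q (((1 : ℂ) / 2) • (q t * (bt t)⁻¹ * (b - b₀)))
        (Set.Icc (0 : ℝ) 1) t) :
    -- `b_t` is positive definite, hence invertible, for all `t ∈ [0,1]`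
    (∀ t ∈ Set.Icc (0 : ℝ) 1, (bt t).PosDef ∧ IsUnit (bt t)) ∧
    -- `q(t)* b₀ q(t) = b_t` on `[0,1]`, and in particular `b = q(1)* b₀ q(1)`
    (∀ t ∈ Set.Icc (0 : ℝ) 1, (q t)ᴴ * b₀ * q t = bt t) ∧
    IsUnit (q 1) ∧ b = (q 1)ᴴ * b₀ * q 1 := by
  have hpos : ∀ t ∈ Icc (0 : ℝ) 1, (bt t).PosDef := fun t ht =>
    hbt ▸ hb₀.one_sub_smul_add_smul hb ht
  have hdet : ∀ t ∈ Icc (0 : ℝ) 1, IsUnit (bt t).det := fun t ht =>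
    (isUnit_iff_isUnit_det _).1 (hpos t ht).isUnit
  set M : ℝ → Matrix (Fin N) (Fin N) ℂ := fun t => ((1 : ℂ) / 2) • ((bt t)⁻¹ * (b - b₀))
  have hM : ContinuousOn M (Icc 0 1) := by
    have hbt_cont : Continuous bt := hbt ▸ by fun_prop
    exact ((hbt_cont.continuousOn.matrix_inv hdet).mul continuousOn_const).const_smul ((1 : ℂ) / 2)
  have hcongr : ∀ t ∈ Icc (0 : ℝ) 1, HasDerivWithinAt (fun t => (q t)ᴴ * b₀ * q t)
      (lyapunovCLM (M t) ((q t)ᴴ * b₀ * q t)) (Icc 0 1) t := fun t ht =>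
    ((hq' t ht).congr_deriv (by simp only [M, mul_smul_comm, mul_assoc])).conjTranspose_mul_mul b₀
  have hinterp : ∀ t ∈ Icc (0 : ℝ) 1,
      HasDerivWithinAt bt (lyapunovCLM (M t) (bt t)) (Icc 0 1) t := fun t ht => by
    rw [lyapunovCLM_half_inv_mul_self (hpos t ht).1 (hdet t ht) (hb.1.sub hb₀.1), hbt]
    exact hasDerivWithinAt_one_sub_smul_add_smul b₀ b _ t
  have key := eqOn_Icc_of_hasDerivWithinAt_clm_apply
    ((lyapunovCLM (n := Fin N) (𝕜 := ℂ)).continuous.comp_continuousOn hM) hcongr hinterp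
    (by simp [hq0, hbt])
  have hb1 : b = (q 1)ᴴ * b₀ * q 1 := by
    rw [show (q 1)ᴴ * b₀ * q 1 = bt 1 from key ⟨zero_le_one, le_rfl⟩, hbt]
    simp
  exact ⟨fun t ht => ⟨hpos t ht, (hpos t ht).isUnit⟩, fun t ht => key ht,
    isUnit_of_mul_isUnit_right (hb1 ▸ hb.isUnit), hb1⟩

theorem stmt13 (N : ℕ) (hN : 1 ≤ N)
    (b₀ b : Matrix (Fin N) (Fin N) ℂ) (hb₀ : b₀.PosDef) (hb : b.PosDef)
    -- the interpolated inner products `b_t = (1-t) b₀ + t b`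
    (bt : ℝ → Matrix (Fin N) (Fin N) ℂ)
    (hbt : bt = fun t => ((1 - t : ℝ) : ℂ) • b₀ + ((t : ℝ) : ℂ) • b)
    -- `q` is differentiable on `[0,1]` with `q(0) = Id` and
    -- `q'(t) = ½ q(t) b_t⁻¹ (b - b₀)`
    (q : ℝ → Matrix (Fin N) (Fin N) ℂ) (hq0 : q 0 = 1)
    (hq' : ∀ t ∈ Set.Icc (0 : ℝ) 1,
      HasDerivWithinAt q (((1 : ℂ) / 2) • (q t * (bt t)⁻¹ * (b - b₀)))
        (Set.Icc (0 : ℝ) 1) t) :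
    -- `b_t` is positive definite, hence invertible, for all `t ∈ [0,1]`
    (∀ t ∈ Set.Icc (0 : ℝ) 1, (bt t).PosDef ∧ IsUnit (bt t)) ∧
    -- `q(t)* b₀ q(t) = b_t` on `[0,1]`, and in particular `b = q(1)* b₀ q(1)`
    (∀ t ∈ Set.Icc (0 : ℝ) 1, (q t)ᴴ * b₀ * q t = bt t) ∧
    IsUnit (q 1) ∧ b = (q 1)ᴴ * b₀ * q 1 :=
  stmt13_general N b₀ b hb₀ hb bt hbt q hq0 hq'
end

section
/- Let m ≥ 1, let η ∈ ℝ^m, and let σ, Ψ, r ∈ ℝ satisfy σ² = Ψ² ‖η‖². Define the linear map s : ℝ^m × ℝ × ℝ → ℝ^m × ℝ × ℝ by s(u, a, b) = (Ψ r² a η, -Ψ ⟨η, u⟩ + r σ b, r σ a), where ⟨·,·⟩ is the standard inner product on ℝ^m. Then s is nilpotent; in fact s ∘ s ∘ s = 0. -/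
/-!
Writing `v = (u, a, b)`, the map is `s v = a • w + ψ v • e` with `w = (Ψ r² η, 0, r σ)`,
`e = (0, 1, 0)` and `ψ v = -Ψ ⟨η, u⟩ + r σ b`. Both `w` and `e` lie in `ker ψ`, and
`ψ w = r² (σ² - Ψ² ‖η‖²)` vanishes exactly at the trapped set, so `s w = 0` while `s e = w`.
Hence `s² v = ψ v • w` and `s³ = 0`.
-/

theorem LinearMap.smulRight_add_smulRight_pow_three_eq_zero {R M : Type*} [Semiring R]
    [AddCommMonoid M] [Module R M] (φ ψ : M →ₗ[R] R) (w e : M)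
    (hφw : φ w = 0) (hψw : ψ w = 0) (hψe : ψ e = 0) :
    (φ.smulRight w + ψ.smulRight e) ^ 3 = 0 := by
  set f := φ.smulRight w + ψ.smulRight e
  have hfw : f w = 0 := by simp [f, hφw, hψw]
  have hf2 : ∀ x, f (f x) = (ψ x * φ e) • w := by
    intro x
    simp [f, hφw, hψw, hψe, mul_smul]
  ext x
  calc (f ^ 3) x = f (f (f x)) := rfl
    _ = 0 := by rw [hf2 x, map_smul, hfw, smul_zero]

theorem stmt16_general (m : ℕ) (η : Fin m → ℝ) (σ Ψ r : ℝ)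
    (htrap : σ ^ 2 = Ψ ^ 2 * ∑ i, η i ^ 2)
    -- the zeroth order part `s` of the subprincipal operator at the trapped set
    (s : (Fin m → ℝ) × ℝ × ℝ → (Fin m → ℝ) × ℝ × ℝ)
    (hs : s = fun v =>
      (fun i => Ψ * r ^ 2 * v.2.1 * η i,
        -Ψ * (∑ i, η i * v.1 i) + r * σ * v.2.2,
        r * σ * v.2.1)) :
    ∀ v, s (s (s v)) = 0 := by
  let φ : (Fin m → ℝ) × ℝ × ℝ →ₗ[ℝ] ℝ := LinearMap.fst ℝ ℝ ℝ ∘ₗ LinearMap.snd ℝ _ _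
  let ψ : (Fin m → ℝ) × ℝ × ℝ →ₗ[ℝ] ℝ :=
    -Ψ • (dotProductBilin ℝ ℝ η ∘ₗ LinearMap.fst ℝ _ _) +
      (r * σ) • (LinearMap.snd ℝ ℝ ℝ ∘ₗ LinearMap.snd ℝ _ _)
  let w : (Fin m → ℝ) × ℝ × ℝ := ((Ψ * r ^ 2) • η, 0, r * σ)
  let e : (Fin m → ℝ) × ℝ × ℝ := (0, 1, 0)
  have hs_eq : s = ⇑(φ.smulRight w + ψ.smulRight e) := by
    subst hs
    ext v <;>
      simp only [Pi.add_apply, Pi.smul_apply, Pi.zero_apply, smul_zero, LinearMap.coe_smulRight,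
        LinearMap.coe_comp, LinearMap.coe_fst, LinearMap.coe_snd, Function.comp_apply,
        LinearMap.smul_apply, LinearMap.add_apply, dotProductBilin_apply_apply, dotProduct,
        Prod.smul_mk, smul_eq_mul, Prod.mk_add_mk, φ, ψ, w, e] <;>
      ring
  have hψw : ψ w = 0 := by
    simp only [ψ, w, LinearMap.add_apply, LinearMap.smul_apply, LinearMap.coe_comp,
      LinearMap.coe_fst, LinearMap.coe_snd, Function.comp_apply, map_smul,
      dotProductBilin_apply_apply, dotProduct, ← pow_two, smul_eq_mul]
    linear_combination r ^ 2 * htrap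
  have hcube := LinearMap.smulRight_add_smulRight_pow_three_eq_zero φ ψ w e
    (by simp [φ, w]) hψw (by simp [ψ, e])
  intro v
  rw [hs_eq]
  exact LinearMap.congr_fun hcube v

theorem stmt16 (m : ℕ) (hm : 1 ≤ m) (η : Fin m → ℝ) (σ Ψ r : ℝ)
    (htrap : σ ^ 2 = Ψ ^ 2 * ∑ i, η i ^ 2)
    -- the zeroth order part `s` of the subprincipal operator at the trapped set
    (s : (Fin m → ℝ) × ℝ × ℝ → (Fin m → ℝ) × ℝ × ℝ)
    (hs : s = fun v =>
      (fun i => Ψ * r ^ 2 * v.2.1 * η i,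
        -Ψ * (∑ i, η i * v.1 i) + r * σ * v.2.2,
        r * σ * v.2.1)) :
    ∀ v, s (s (s v)) = 0 :=
  stmt16_general m η σ Ψ r htrap s hs
end

section
/- Let m ≥ 1, ε > 0, let η ∈ ℝ^m be nonzero, and let σ, Ψ, r ∈ ℝ satisfy σ² = Ψ² ‖η‖². Define linear maps on ℝ^m × ℝ × ℝ: s(u, a, b) = (Ψ r² a η, -Ψ ⟨η, u⟩ + r σ b, r σ a); q(u, a, b) = (u, ε^{-1} Ψ r² a, -ε^{-2} ‖η‖^{-1} Ψ² r² ⟨η, u⟩ + ε^{-2} ‖η‖^{-1} Ψ r³ σ b); and s'(u, a, b) = (ε a η, ε ‖η‖ b, 0). Then q ∘ s = s' ∘ q; that is, conjugating s by q (which is invertible when Ψ, r, σ ≠ 0) turns s into the strictly upper triangular map s' whose nonzero blocks have size ε‖η‖. -/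
/-!
The first two components of `q ∘ s = s' ∘ q` are identities of rational functions in `ε` and
`‖η‖`. In the third, `q ∘ s` equals `ε⁻² ‖η‖⁻¹ Ψ r⁴ a (σ² - Ψ² ‖η‖²)`, which the trapping
condition makes zero.
-/

lemma sqrt_sum_sq_ne_zero {ι : Type*} [Fintype ι] {η : ι → ℝ} (hη : η ≠ 0) :
    Real.sqrt (∑ i, η i ^ 2) ≠ 0 := by
  obtain ⟨i, hi⟩ := Function.ne_iff.mp hη
  refine (Real.sqrt_pos.mpr (Finset.sum_pos' (fun j _ => sq_nonneg (η j)) ?_)).ne'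
  exact ⟨i, Finset.mem_univ i, sq_pos_of_ne_zero hi⟩

lemma sum_mul_mul_self {ι : Type*} [Fintype ι] (η : ι → ℝ) (c : ℝ) :
    ∑ i, η i * (c * η i) = c * ∑ i, η i ^ 2 := by
  rw [Finset.mul_sum]
  exact Finset.sum_congr rfl fun i _ => by ring

theorem stmt17_general (m : ℕ) (ε : ℝ) (hε : 0 < ε)
    (η : Fin m → ℝ) (hη : η ≠ 0) (σ Ψ r : ℝ)
    (htrap : σ ^ 2 = Ψ ^ 2 * ∑ i, η i ^ 2)
    -- the zeroth order part `s` of the subprincipal operator at the trapped set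
    (s : (Fin m → ℝ) × ℝ × ℝ → (Fin m → ℝ) × ℝ × ℝ)
    (hs : s = fun v =>
      (fun i => Ψ * r ^ 2 * v.2.1 * η i,
        -Ψ * (∑ i, η i * v.1 i) + r * σ * v.2.2,
        r * σ * v.2.1))
    -- the change of basis `q`
    (q : (Fin m → ℝ) × ℝ × ℝ → (Fin m → ℝ) × ℝ × ℝ)
    (hq : q = fun v =>
      (v.1,
        ε⁻¹ * Ψ * r ^ 2 * v.2.1,
        -(ε ^ 2)⁻¹ * (Real.sqrt (∑ i, η i ^ 2))⁻¹ * Ψ ^ 2 * r ^ 2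
            * (∑ i, η i * v.1 i)
          + (ε ^ 2)⁻¹ * (Real.sqrt (∑ i, η i ^ 2))⁻¹ * Ψ * r ^ 3 * σ * v.2.2))
    -- the strictly upper triangular map `s'`
    (s' : (Fin m → ℝ) × ℝ × ℝ → (Fin m → ℝ) × ℝ × ℝ)
    (hs' : s' = fun v =>
      (fun i => ε * v.2.1 * η i,
        ε * Real.sqrt (∑ i, η i ^ 2) * v.2.2,
        0)) :
    ∀ v, q (s v) = s' (q v) := by
  subst hs hq hs'
  have hN : Real.sqrt (∑ i, η i ^ 2) ≠ 0 := sqrt_sum_sq_ne_zero hη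
  have hε0 : ε ≠ 0 := hε.ne'
  rintro ⟨u, a, b⟩
  refine Prod.ext (funext fun i => ?_) (Prod.ext ?_ ?_)
  · field_simp
  · field_simp
  · simp only [sum_mul_mul_self]
    linear_combination ((ε ^ 2)⁻¹ * (Real.sqrt (∑ i, η i ^ 2))⁻¹ * Ψ * r ^ 4 * a) * htrap

theorem stmt17 (m : ℕ) (hm : 1 ≤ m) (ε : ℝ) (hε : 0 < ε)
    (η : Fin m → ℝ) (hη : η ≠ 0) (σ Ψ r : ℝ)
    (htrap : σ ^ 2 = Ψ ^ 2 * ∑ i, η i ^ 2)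
    -- the zeroth order part `s` of the subprincipal operator at the trapped set
    (s : (Fin m → ℝ) × ℝ × ℝ → (Fin m → ℝ) × ℝ × ℝ)
    (hs : s = fun v =>
      (fun i => Ψ * r ^ 2 * v.2.1 * η i,
        -Ψ * (∑ i, η i * v.1 i) + r * σ * v.2.2,
        r * σ * v.2.1))
    -- the change of basis `q`
    (q : (Fin m → ℝ) × ℝ × ℝ → (Fin m → ℝ) × ℝ × ℝ)
    (hq : q = fun v =>
      (v.1,
        ε⁻¹ * Ψ * r ^ 2 * v.2.1,
        -(ε ^ 2)⁻¹ * (Real.sqrt (∑ i, η i ^ 2))⁻¹ * Ψ ^ 2 * r ^ 2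
            * (∑ i, η i * v.1 i)
          + (ε ^ 2)⁻¹ * (Real.sqrt (∑ i, η i ^ 2))⁻¹ * Ψ * r ^ 3 * σ * v.2.2))
    -- the strictly upper triangular map `s'`
    (s' : (Fin m → ℝ) × ℝ × ℝ → (Fin m → ℝ) × ℝ × ℝ)
    (hs' : s' = fun v =>
      (fun i => ε * v.2.1 * η i,
        ε * Real.sqrt (∑ i, η i ^ 2) * v.2.2,
        0)) :
    ∀ v, q (s v) = s' (q v) :=
  stmt17_general m ε hε η hη σ Ψ r htrap s hs q hq s' hs'
end
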